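/- arXiv:1811.01360 — 2 statements merged into one kernel-verified Lean document; each statement's English description precedes it below -/
import Mathlib

section
/- For every σ > 0, ω > 0 and c with c² < 4ω, the solitary-wave profile satisfies the Pohozaev-type identity ∫_ℝ |φ_{ω,c}'(x)|² dx = ω · ∫_ℝ |φ_{ω,c}(x)|² dx. -/
open MeasureTheory

/-- The amplitude `Φ_{ω,c}` of the solitary-wave profile for the generalized
derivative nonlinear Schrödinger equation. -/
noncomputable def PhiProf (σ ω c : ℝ) (x : ℝ) : ℝ :=
  ((σ + 1) * (4 * ω - c ^ 2) /
      (2 * Real.sqrt ω * Real.cosh (σ * Real.sqrt (4 * ω - c ^ 2) * x) - c)) ^ (1 / (2 * σ))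

/-- The solitary-wave profile `φ_{ω,c}`. -/
noncomputable def phiProf (σ ω c : ℝ) (x : ℝ) : ℂ :=
  (PhiProf σ ω c x : ℂ) *
    Complex.exp (Complex.I *
      (((c / 2) * x : ℝ) - ((1 / (2 * σ + 2)) * ∫ y in Set.Iic x, PhiProf σ ω c y ^ (2 * σ) : ℝ)))

/-!
Write `φ = Φ e^{iθ}` with `Φ, θ` real. Then `|φ'|² = Φ'² + Φ²θ'²`, and for the explicit profile
this equals `ωΦ²` at every point, so the integrals agree without any integration by parts.
With `D = 2√ω cosh t - c`, `t = σ√(4ω - c²) x`, differentiating gives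
`Φ'/Φ = -√ω √(4ω - c²) sinh t / D` and `θ' = c/2 - Φ^{2σ}/(2σ+2) = √ω (c cosh t - 2√ω) / D`,
and `cosh² - sinh² = 1` turns `(4ω - c²) sinh² t + (c cosh t - 2√ω)²` into `D²`.
-/

open Real Set

theorem HasDerivAt.ofReal_mul_exp_I_mul {A θ : ℝ → ℝ} {A' θ' x : ℝ}
    (hA : HasDerivAt A A' x) (hθ : HasDerivAt θ θ' x) :
    HasDerivAt (fun y => (A y : ℂ) * Complex.exp (Complex.I * θ y))
      ((A' + (A x * θ' : ℝ) * Complex.I) * Complex.exp (Complex.I * θ x)) x := by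
  refine (hA.ofReal_comp.mul (hθ.ofReal_comp.const_mul Complex.I).cexp).congr_deriv ?_
  push_cast
  ring

theorem norm_ofReal_add_mul_I_mul_exp_sq (a b t : ℝ) :
    ‖((a : ℂ) + b * Complex.I) * Complex.exp (Complex.I * t)‖ ^ 2 = a ^ 2 + b ^ 2 := by
  rw [norm_mul, mul_comm Complex.I, Complex.norm_exp_ofReal_mul_I, mul_one, Complex.sq_norm,
    Complex.normSq_add_mul_I]

theorem hasDerivAt_integral_Iic {E : Type*} [NormedAddCommGroup E] [NormedSpace ℝ E]
    [CompleteSpace E] {f : ℝ → E} {x : ℝ} (hf : Integrable f) (hfx : ContinuousAt f x) :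
    HasDerivAt (fun u => ∫ y in Iic u, f y) (f x) x := by
  have split : (fun u => ∫ y in Iic u, f y) = fun u => (∫ y in Iic 0, f y) + ∫ y in 0..u, f y := by
    funext u
    rw [← intervalIntegral.integral_Iic_sub_Iic hf.integrableOn hf.integrableOn]
    abel
  rw [split]
  exact (intervalIntegral.integral_hasDerivAt_right hf.intervalIntegrable
    (hf.aestronglyMeasurable.stronglyMeasurableAtFilter) hfx).const_add _

theorem Real.one_add_sq_div_four_le_cosh (t : ℝ) : 1 + t ^ 2 / 4 ≤ cosh t := by
  rw [← cosh_abs, cosh_eq, ← sq_abs t]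
  linarith [quadratic_le_exp_of_nonneg (abs_nonneg t), one_sub_le_exp_neg |t|]

theorem Real.integrable_inv_cosh : Integrable fun t : ℝ => (cosh t)⁻¹ := by
  refine (integrable_inv_one_add_sq.comp_mul_left' (R := 1 / 2) (by norm_num)).mono'
    (by fun_prop) (ae_of_all _ fun t => ?_)
  rw [norm_inv, norm_of_nonneg (cosh_pos t).le]
  gcongr
  linarith [one_add_sq_div_four_le_cosh t]

theorem abs_lt_two_mul_sqrt {c ω : ℝ} (hc : c ^ 2 < 4 * ω) : |c| < 2 * √ω := by
  have hω : 0 ≤ ω := by nlinarith [sq_nonneg c]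
  refine lt_of_pow_lt_pow_left₀ 2 (by positivity) ?_
  rw [sq_abs, mul_pow, sq_sqrt hω]
  linarith

noncomputable def PhiDenom (σ ω c x : ℝ) : ℝ :=
  2 * √ω * cosh (σ * √(4 * ω - c ^ 2) * x) - c

noncomputable def PhiPhase (σ ω c x : ℝ) : ℝ :=
  c / 2 * x - 1 / (2 * σ + 2) * ∫ y in Iic x, PhiProf σ ω c y ^ (2 * σ)

section profile

variable {σ ω c : ℝ}

theorem PhiProf_eq (x : ℝ) :
    PhiProf σ ω c x = ((σ + 1) * (4 * ω - c ^ 2) / PhiDenom σ ω c x) ^ (1 / (2 * σ)) :=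
  rfl

theorem phiProf_eq :
    phiProf σ ω c = fun x => (PhiProf σ ω c x : ℂ) * Complex.exp (Complex.I * PhiPhase σ ω c x) := by
  funext x
  simp only [phiProf, PhiPhase, Complex.ofReal_sub]

theorem hasDerivAt_PhiDenom (x : ℝ) :
    HasDerivAt (PhiDenom σ ω c)
      (2 * √ω * (σ * √(4 * ω - c ^ 2)) * sinh (σ * √(4 * ω - c ^ 2) * x)) x := by
  have hk := ((hasDerivAt_id x).const_mul (σ * √(4 * ω - c ^ 2))).cosh
  refine ((hk.const_mul (2 * √ω)).sub_const c).congr_deriv ?_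
  simp only [id, mul_one]
  ring

theorem continuous_PhiDenom : Continuous (PhiDenom σ ω c) :=
  continuous_iff_continuousAt.2 fun x => (hasDerivAt_PhiDenom x).continuousAt

theorem mul_cosh_le_PhiDenom (x : ℝ) :
    (2 * √ω - |c|) * cosh (σ * √(4 * ω - c ^ 2) * x) ≤ PhiDenom σ ω c x := by
  have := one_le_cosh (σ * √(4 * ω - c ^ 2) * x)
  unfold PhiDenom
  nlinarith [le_abs_self c, abs_nonneg c]

theorem PhiDenom_pos (hc : c ^ 2 < 4 * ω) (x : ℝ) : 0 < PhiDenom σ ω c x :=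
  (mul_pos (sub_pos.2 (abs_lt_two_mul_sqrt hc)) (cosh_pos _)).trans_le (mul_cosh_le_PhiDenom x)

theorem integrable_inv_PhiDenom (hσ : σ ≠ 0) (hc : c ^ 2 < 4 * ω) :
    Integrable fun x => (PhiDenom σ ω c x)⁻¹ := by
  have hm := sub_pos.2 (abs_lt_two_mul_sqrt hc)
  have hk : σ * √(4 * ω - c ^ 2) ≠ 0 := mul_ne_zero hσ (sqrt_pos.2 (by linarith)).ne'
  refine ((integrable_inv_cosh.comp_mul_left' hk).const_mul (2 * √ω - |c|)⁻¹).mono'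
    (continuous_PhiDenom.inv₀ fun x => (PhiDenom_pos hc x).ne').aestronglyMeasurable
    (ae_of_all _ fun x => ?_)
  rw [norm_inv, norm_of_nonneg (PhiDenom_pos hc x).le, ← mul_inv]
  exact inv_anti₀ (by positivity) (mul_cosh_le_PhiDenom x)

theorem PhiProf_rpow (hσ : 0 < σ) (hc : c ^ 2 < 4 * ω) (x : ℝ) :
    PhiProf σ ω c x ^ (2 * σ) = (σ + 1) * (4 * ω - c ^ 2) / PhiDenom σ ω c x := by
  have hbase : 0 ≤ (σ + 1) * (4 * ω - c ^ 2) / PhiDenom σ ω c x :=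
    div_nonneg (by nlinarith) (PhiDenom_pos hc x).le
  rw [PhiProf_eq, ← rpow_mul hbase, one_div_mul_cancel (by positivity), rpow_one]

theorem hasDerivAt_PhiProf (hσ : 0 < σ) (hc : c ^ 2 < 4 * ω) (x : ℝ) :
    HasDerivAt (PhiProf σ ω c)
      (-(PhiProf σ ω c x * (√ω * √(4 * ω - c ^ 2) * sinh (σ * √(4 * ω - c ^ 2) * x)) /
        PhiDenom σ ω c x)) x := by
  have hD : 0 < PhiDenom σ ω c x := PhiDenom_pos hc x
  have hbase : 0 < (σ + 1) * (4 * ω - c ^ 2) / PhiDenom σ ω c x := div_pos (by nlinarith) hD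
  have hq : 4 * ω - c ^ 2 ≠ 0 := (sub_pos.2 hc).ne'
  have hquot := (hasDerivAt_const x ((σ + 1) * (4 * ω - c ^ 2))).div (hasDerivAt_PhiDenom x) hD.ne'
  refine ((hasDerivAt_rpow_const (Or.inl hbase.ne')).comp x hquot).congr_deriv ?_
  rw [rpow_sub hbase, rpow_one, ← PhiProf_eq]
  field_simp
  ring

theorem hasDerivAt_PhiPhase (hσ : 0 < σ) (hc : c ^ 2 < 4 * ω) (x : ℝ) :
    HasDerivAt (PhiPhase σ ω c)
      (√ω * (c * cosh (σ * √(4 * ω - c ^ 2) * x) - 2 * √ω) / PhiDenom σ ω c x) x := by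
  have hω : 0 ≤ ω := by nlinarith [sq_nonneg c]
  have hD : 0 < PhiDenom σ ω c x := PhiDenom_pos hc x
  have hpow : (fun y => PhiProf σ ω c y ^ (2 * σ)) =
      fun y => (σ + 1) * (4 * ω - c ^ 2) * (PhiDenom σ ω c y)⁻¹ :=
    funext fun y => PhiProf_rpow hσ hc y
  have hint : Integrable fun y => PhiProf σ ω c y ^ (2 * σ) :=
    hpow ▸ (integrable_inv_PhiDenom hσ.ne' hc).const_mul _
  have hcont : Continuous fun y => PhiProf σ ω c y ^ (2 * σ) :=
    hpow ▸ continuous_const.mul (continuous_PhiDenom.inv₀ fun y => (PhiDenom_pos hc y).ne')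
  refine (((hasDerivAt_id x).const_mul (c / 2)).sub
    ((hasDerivAt_integral_Iic hint hcont.continuousAt).const_mul (1 / (2 * σ + 2)))).congr_deriv ?_
  rw [PhiProf_rpow hσ hc]
  field_simp
  unfold PhiDenom
  linear_combination 4 * sq_sqrt hω

theorem PhiDenom_sq (hω : 0 ≤ ω) (x : ℝ) :
    (4 * ω - c ^ 2) * sinh (σ * √(4 * ω - c ^ 2) * x) ^ 2 +
      (c * cosh (σ * √(4 * ω - c ^ 2) * x) - 2 * √ω) ^ 2 = PhiDenom σ ω c x ^ 2 := by
  unfold PhiDenom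
  linear_combination (c ^ 2 - 4 * √ω ^ 2) * cosh_sq (σ * √(4 * ω - c ^ 2) * x) -
    4 * sinh (σ * √(4 * ω - c ^ 2) * x) ^ 2 * sq_sqrt hω

theorem norm_deriv_phiProf_sq (hσ : 0 < σ) (hc : c ^ 2 < 4 * ω) (x : ℝ) :
    ‖deriv (phiProf σ ω c) x‖ ^ 2 = ω * ‖phiProf σ ω c x‖ ^ 2 := by
  have hω : 0 ≤ ω := by nlinarith [sq_nonneg c]
  have hD : 0 < PhiDenom σ ω c x := PhiDenom_pos hc x
  rw [phiProf_eq, ((hasDerivAt_PhiProf hσ hc x).ofReal_mul_exp_I_mul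
      (hasDerivAt_PhiPhase hσ hc x)).deriv, norm_ofReal_add_mul_I_mul_exp_sq, norm_mul,
    mul_comm Complex.I, Complex.norm_exp_ofReal_mul_I, mul_one, Complex.norm_real,
    Real.norm_eq_abs, sq_abs]
  have hsq := PhiDenom_sq (σ := σ) (c := c) hω x
  set t := σ * √(4 * ω - c ^ 2) * x
  field_simp
  linear_combination PhiProf σ ω c x ^ 2 * √ω ^ 2 * sinh t ^ 2 *
      sq_sqrt (sub_pos.2 hc).le + PhiProf σ ω c x ^ 2 * √ω ^ 2 * hsq +
    PhiProf σ ω c x ^ 2 * PhiDenom σ ω c x ^ 2 * sq_sqrt hω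

end profile

theorem solitary_wave_pohozaev_general (σ ω c : ℝ) (hσ : 0 < σ) (hc : c ^ 2 < 4 * ω) :
    ∫ x : ℝ, ‖deriv (phiProf σ ω c) x‖ ^ 2 =
      ω * ∫ x : ℝ, ‖phiProf σ ω c x‖ ^ 2 := by
  simp_rw [norm_deriv_phiProf_sq hσ hc]
  exact integral_const_mul ω _

/-- Pohozaev-type identity: `‖φ_{ω,c}'‖_{L²}² = ω ‖φ_{ω,c}‖_{L²}²`. -/
theorem solitary_wave_pohozaev (σ ω c : ℝ) (hσ : 0 < σ) (hω : 0 < ω) (hc : c ^ 2 < 4 * ω) :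
    ∫ x : ℝ, ‖deriv (phiProf σ ω c) x‖ ^ 2 =
      ω * ∫ x : ℝ, ‖phiProf σ ω c x‖ ^ 2 :=
  solitary_wave_pohozaev_general σ ω c hσ hc
end

section
/- For every σ > 0, ω > 0 and c with c² < 4ω, writing α = √(4ω−c²), one has the exact L² identity ∫_ℝ |φ_{ω,c}(x)|² dx = (2/σ)·((σ+1)/(2√ω))^{1/σ} · α^{2/σ − 1} · ∫_0^∞ (cosh x − c/(2√ω))^{−1/σ} dx. -/
open MeasureTheory

/-!
Squaring removes the phase of `φ_{ω,c}`, and `Φ_{ω,c}²` is a constant multiple of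
`(cosh (σ α x) - c / (2 √ω)) ^ (-1/σ)`. The substitution `u = σ α x` and the evenness of `cosh`
turn its integral over `ℝ` into `2 / (σ α)` times the integral over `(0, ∞)`.
-/

open Real

lemma rpow_one_div_two_mul_sq {a : ℝ} (ha : 0 ≤ a) (s : ℝ) :
    (a ^ (1 / (2 * s))) ^ 2 = a ^ (1 / s) := by
  rw [← rpow_natCast, ← rpow_mul ha]
  congr 1
  push_cast
  ring

lemma norm_phiProf (σ ω c x : ℝ) : ‖phiProf σ ω c x‖ = |PhiProf σ ω c x| := by
  rw [phiProf, norm_mul, Complex.norm_exp, Complex.norm_real, norm_eq_abs]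
  simp [Complex.mul_re]

lemma PhiProf_sq {σ ω c : ℝ} (hσ : -1 ≤ σ) (hω : 0 < ω) (hc : c ^ 2 < 4 * ω) (x : ℝ) :
    PhiProf σ ω c x ^ 2 =
      ((σ + 1) / (2 * √ω)) ^ (1 / σ) * √(4 * ω - c ^ 2) ^ (2 / σ) *
        (cosh (σ * √(4 * ω - c ^ 2) * x) - c / (2 * √ω)) ^ (-(1 / σ)) := by
  set t := cosh (σ * √(4 * ω - c ^ 2) * x)
  have hsqrtω : 0 < √ω := sqrt_pos.mpr hω
  have hc' : c < 2 * √ω := by nlinarith [sq_sqrt hω.le]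
  have hgap : 0 < t - c / (2 * √ω) := by
    have : c / (2 * √ω) < 1 := (div_lt_one (by positivity)).mpr hc'
    linarith [one_le_cosh (σ * √(4 * ω - c ^ 2) * x)]
  have hbase : (σ + 1) * (4 * ω - c ^ 2) / (2 * √ω * t - c)
      = (σ + 1) / (2 * √ω) * √(4 * ω - c ^ 2) ^ 2 * (t - c / (2 * √ω))⁻¹ := by
    rw [sq_sqrt (by linarith)]
    field_simp
  have hcoef : 0 ≤ (σ + 1) / (2 * √ω) := by
    have : 0 ≤ σ + 1 := by linarith
    positivity
  rw [PhiProf, hbase, rpow_one_div_two_mul_sq (by positivity), mul_rpow (by positivity)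
    (by positivity), mul_rpow hcoef (by positivity), ← rpow_natCast √(4 * ω - c ^ 2) 2,
    ← rpow_mul (sqrt_nonneg _), inv_rpow hgap.le, ← rpow_neg hgap.le]
  push_cast
  ring_nf

lemma integral_comp_cosh_mul (g : ℝ → ℝ) (k : ℝ) :
    ∫ x, g (cosh (k * x)) = 2 / |k| * ∫ x in Set.Ioi 0, g (cosh x) := by
  have heven := integral_comp_abs (f := fun x ↦ g (cosh x))
  simp only [cosh_abs] at heven
  rw [Measure.integral_comp_mul_left (fun x ↦ g (cosh x)), heven, smul_eq_mul, abs_inv]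
  ring

/-- Exact `L²` identity for the solitary-wave profile, with `α = √(4ω − c²)`. -/
theorem solitary_wave_L2_identity (σ ω c : ℝ) (hσ : 0 < σ) (hω : 0 < ω) (hc : c ^ 2 < 4 * ω) :
    ∫ x : ℝ, ‖phiProf σ ω c x‖ ^ 2 =
      (2 / σ) * ((σ + 1) / (2 * Real.sqrt ω)) ^ (1 / σ) *
        Real.sqrt (4 * ω - c ^ 2) ^ (2 / σ - 1) *
        ∫ x in Set.Ioi (0 : ℝ), (Real.cosh x - c / (2 * Real.sqrt ω)) ^ (-(1 / σ)) := by
  have hα : 0 < √(4 * ω - c ^ 2) := sqrt_pos.mpr (by linarith)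
  simp_rw [norm_phiProf, sq_abs, PhiProf_sq (σ := σ) (by linarith) hω hc]
  rw [integral_const_mul, integral_comp_cosh_mul (fun t ↦ (t - c / (2 * √ω)) ^ (-(1 / σ))),
    abs_of_pos (by positivity), rpow_sub hα, rpow_one]
  field_simp
end
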